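/- arXiv:2012.14586 — 2 statements merged into one kernel-verified Lean document; each statement's English description precedes it below -/
import Mathlib

section
/- Let M be a DFA over an alphabet α with finite state type Q, let Δ : List α → Bool, and let S and E be finite sets of lists over α. Suppose M is consistent with the observation table, i.e. for all s ∈ S and e ∈ E, Δ(s ++ e) = true if and only if s ++ e ∈ M.accepts. Then the number of distinct rows of S with respect to E is at most the cardinality of Q. -/
/-- The row of `s` with respect to the set `E` of separating sequences:
the function assigning to each `e ∈ E` the table entry `Δ (s ++ e)`
(and `none` outside of `E`). -/
def row {β : Type*} [DecidableEq β] (Δ : List β → Bool) (E : Finset (List β))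
    (s : List β) : List β → Option Bool :=
  fun e => if e ∈ E then some (Δ (s ++ e)) else none

theorem stmt12 {α Q : Type*} [DecidableEq α] [Fintype Q] (M : DFA α Q)
    (Δ : List α → Bool) (S E : Finset (List α))
    (hcons : ∀ s ∈ S, ∀ e ∈ E, (Δ (s ++ e) = true ↔ s ++ e ∈ M.accepts)) :
    (row Δ E '' ↑S).ncard ≤ Fintype.card Q := by
  classical
  set g : Q → (List α → Option Bool) := fun q e =>
    if e ∈ E then some (decide (M.evalFrom q e ∈ M.accept)) else none with hg
  have hsub : row Δ E '' ↑S ⊆ g '' Set.univ := by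
    rintro _ ⟨s, hs, rfl⟩
    refine ⟨M.eval s, Set.mem_univ _, ?_⟩
    funext e
    simp only [hg, row]
    by_cases he : e ∈ E
    · simp only [he, if_true, Option.some_inj]
      have h2 : (s ++ e ∈ M.accepts) ↔ M.evalFrom (M.eval s) e ∈ M.accept := by
        simp [DFA.mem_accepts, DFA.eval, DFA.evalFrom_of_append]
      have : (Δ (s ++ e) = true) ↔ (decide (M.evalFrom (M.eval s) e ∈ M.accept) = true) := by
        rw [hcons s hs e he, h2, decide_eq_true_iff]
      exact Bool.coe_iff_coe.mp this.symm
    · simp [he]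
  calc (row Δ E '' ↑S).ncard ≤ (g '' Set.univ).ncard := by
        apply Set.ncard_le_ncard hsub (Set.toFinite _)
    _ ≤ Set.univ.ncard := Set.ncard_image_le (Set.toFinite _)
    _ = Fintype.card Q := by rw [Set.ncard_univ, Nat.card_eq_fintype_card]
end

section
/- There exists a trace property L over the alphabet Fin 3 (a set of infinite traces L ⊆ (ℕ → Fin 3)) such that L is a safety property, and the predicate on finite words w : List (Fin 3) expressing 'w is a bad prefix of L' is not a computable predicate (¬ ComputablePred). -/
/-- A finite word `w` is a prefix of an infinite trace `t`. -/
def IsPrefixOf {α : Type*} (w : List α) (t : ℕ → α) : Prop :=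
  ∀ i : ℕ, ∀ h : i < w.length, t i = w.get ⟨i, h⟩

/-- `w` is a bad prefix of the trace property `L`. -/
def TraceBadPrefix {α : Type*} (L : Set (ℕ → α)) (w : List α) : Prop :=
  ∀ t : ℕ → α, IsPrefixOf w t → t ∉ L

/-- `L` is a safety trace property. -/
def TraceSafety {α : Type*} (L : Set (ℕ → α)) : Prop :=
  ∀ t : ℕ → α, t ∉ L → ∃ w : List α, IsPrefixOf w t ∧ TraceBadPrefix L w

open Nat.Partrec (Code)
open Nat.Partrec.Code

/-- halting set -/
def Shalt : Code → Prop := fun c => (eval c 0).Dom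

/-- the code word for `n` -/
def cword (n : ℕ) : List (Fin 3) := List.replicate n 1 ++ [2]

lemma cword_pref (n : ℕ) (t : ℕ → Fin 3) :
    IsPrefixOf (cword n) t ↔ (∀ i < n, t i = 1) ∧ t n = 2 := by
  unfold IsPrefixOf cword
  constructor
  · intro h
    constructor
    · intro i hi
      have := h i (by simp; omega)
      rwa [List.get_eq_getElem, List.getElem_append_left (by simpa),
        List.getElem_replicate] at this
    · have := h n (by simp)
      rw [List.get_eq_getElem, List.getElem_append_right (by simp)] at this
      simpa using this
  · rintro ⟨h1, h2⟩ i hi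
    have hi' : i < n + 1 := by simpa using hi
    rcases lt_or_eq_of_le (Nat.lt_succ_iff.mp hi') with hlt | heq
    · rw [List.get_eq_getElem, List.getElem_append_left (by simpa),
        List.getElem_replicate]
      exact h1 i hlt
    · subst heq
      rw [List.get_eq_getElem, List.getElem_append_right (by simp)]
      simpa

/-- The safety language -/
def Lbad : Set (ℕ → Fin 3) := { t | ∀ k : Code, Shalt k → ¬ IsPrefixOf (cword (Encodable.encode k)) t }

lemma bad_iff (k : Code) : TraceBadPrefix Lbad (cword (Encodable.encode k)) ↔ Shalt k := by
  constructor
  · intro hb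
    by_contra hS
    set n := Encodable.encode k with hn
    set t : ℕ → Fin 3 := fun i => if i < n then 1 else if i = n then 2 else 0 with ht
    have hpref : IsPrefixOf (cword n) t := by
      rw [cword_pref]
      constructor
      · intro i hi; simp [ht, hi]
      · simp [ht]
    refine hb t hpref ?_
    intro m hm hpm
    rw [cword_pref] at hpm
    have hmn : Encodable.encode m = n := by
      by_contra hne
      rcases Nat.lt_or_ge (Encodable.encode m) n with hlt | hge
      · have := hpm.2
        simp [ht, hlt] at this
      · have hlt : n < Encodable.encode m := lt_of_le_of_ne hge (Ne.symm hne)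
        have := hpm.1 n hlt
        simp [ht] at this
    have : m = k := Encodable.encode_injective hmn
    exact hS (this ▸ hm)
  · intro hS t hpref hL
    exact hL k hS hpref

lemma safety_Lbad : TraceSafety Lbad := by
  intro t ht
  simp only [Lbad, Set.mem_setOf_eq, not_forall] at ht
  obtain ⟨k, hS, hpref⟩ := ht
  refine ⟨cword (Encodable.encode k), not_not.mp hpref, ?_⟩
  intro t' hp' hL
  exact hL k hS hp'

lemma cword_computable : Computable fun k : Code => cword (Encodable.encode k) := by
  have h1 : Primrec fun n : ℕ => cword n := by
    have hmap : Primrec fun n : ℕ => (List.range n).map (fun _ => (1 : Fin 3)) :=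
      Primrec.list_map Primrec.list_range (Primrec.const 1).to₂
    have happ : Primrec fun n : ℕ => ((List.range n).map (fun _ => (1 : Fin 3))) ++ [2] :=
      Primrec.list_append.comp hmap (Primrec.const [2])
    refine happ.of_eq fun n => ?_
    simp [cword, List.map_const']
  exact (h1.comp Primrec.encode).to_comp

theorem stmt16 :
    ∃ L : Set (ℕ → Fin 3), TraceSafety L ∧
      ¬ ComputablePred (fun w : List (Fin 3) => TraceBadPrefix L w) := by
  refine ⟨Lbad, safety_Lbad, ?_⟩
  intro hcomp
  obtain ⟨f, hf, hfp⟩ := ComputablePred.computable_iff.1 hcomp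
  apply ComputablePred.halting_problem 0
  refine ComputablePred.computable_iff.2
    ⟨fun k => f (cword (Encodable.encode k)), hf.comp cword_computable, ?_⟩
  funext k
  have : TraceBadPrefix Lbad (cword (Encodable.encode k)) =
      (f (cword (Encodable.encode k)) : Prop) := congrFun hfp _
  exact propext ((bad_iff k).symm.trans (this ▸ Iff.rfl))
end
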